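/- arXiv:1404.3455 — 2 statements merged into one kernel-verified Lean document; each statement's English description precedes it below -/
import Mathlib

section
/- Toggling the k-th file swaps adjacent entries of the quotient sequence: for P = [a]×[b] with n = a+b, for every f : P → ℝ>0 and every 1 ≤ k ≤ n−1, the quotient sequence Q(τ_k^* f) is obtained from Q(f) by interchanging its k-th and (k+1)-st entries. -/
open scoped Classical

noncomputable section

instance {α : Type*} [Fintype α] : Fintype (WithTop α) := inferInstanceAs (Fintype (Option α))
instance {α : Type*} [Fintype α] : Fintype (WithBot α) := inferInstanceAs (Fintype (Option α))

variable {P : Type*} [Fintype P] [PartialOrder P]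

/-- The embedding of `P` into `P̂ = WithBot (WithTop P)`, the poset obtained from `P` by
adjoining a new minimum `⊥` and a new maximum `⊤`. -/
def emb (x : P) : WithBot (WithTop P) := ((x : WithTop P) : WithBot (WithTop P))

/-- Extend `f : P → ℝ` to `P̂` with value `v0` at the new minimum and `v1` at the new maximum. -/
def extendHat (v0 v1 : ℝ) (f : P → ℝ) : WithBot (WithTop P) → ℝ :=
  WithBot.recBotCoe v0 (WithTop.recTopCoe v1 f)

/-- `L`: the maximum of the (extended, with `f(0̂) = 0`) values at elements of `P̂` covered by `x`. -/
def plL (f : P → ℝ) (x : P) : ℝ := sSup (extendHat 0 1 f '' {y | y ⋖ emb x})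

/-- `R`: the minimum of the (extended, with `f(1̂) = 1`) values at elements of `P̂` covering `x`. -/
def plR (f : P → ℝ) (x : P) : ℝ := sInf (extendHat 0 1 f '' {y | emb x ⋖ y})

/-- The piecewise-linear toggle at `x`. -/
def plToggle (x : P) (f : P → ℝ) : P → ℝ :=
  Function.update f x (plL f x + plR f x - f x)

/-- `xs` is a linear extension of `P`: an enumeration of all elements such that
`x_i < x_j` in `P` implies `i < j`. -/
def IsLinearExt (xs : List P) : Prop :=
  xs.Nodup ∧ (∀ x : P, x ∈ xs) ∧ xs.Pairwise fun u v => ¬ v < u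

/-- Piecewise-linear rowmotion along the linear extension `xs = [x₁, …, x_p]`:
the composite `τ_{x₁} ∘ ⋯ ∘ τ_{x_p}` (toggling from top to bottom). -/
def plRow (xs : List P) (f : P → ℝ) : P → ℝ := xs.foldr plToggle f

/-- Membership in the order polytope `O(P)`. -/
def InOrderPolytope (f : P → ℝ) : Prop :=
  Monotone f ∧ ∀ x, 0 ≤ f x ∧ f x ≤ 1

/-- `L`: the sum of the (extended, with `f(0̂) = 1`) values at elements of `P̂` covered by `x`. -/
def bL (f : P → ℝ) (x : P) : ℝ :=
  ∑ y : WithBot (WithTop P), if y ⋖ emb x then extendHat 1 1 f y else 0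

/-- `R`: the parallel sum of the (extended, with `f(1̂) = 1`) values at elements of `P̂`
covering `x`. -/
def bR (f : P → ℝ) (x : P) : ℝ :=
  (∑ y : WithBot (WithTop P), if emb x ⋖ y then (extendHat 1 1 f y)⁻¹ else 0)⁻¹

/-- The birational toggle at `x`. -/
def bToggle (x : P) (f : P → ℝ) : P → ℝ :=
  Function.update f x (bL f x * bR f x / f x)

/-- Birational rowmotion along the linear extension `xs = [x₁, …, x_p]`:
the composite `τ_{x₁} ∘ ⋯ ∘ τ_{x_p}` (toggling from top to bottom). -/
def bRow (xs : List P) (f : P → ℝ) : P → ℝ := xs.foldr bToggle f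

/-- The `k`-th file of `[a] × [b]` (in `Fin a × Fin b` coordinates, where `(i,j) : Fin a × Fin b`
corresponds to `(i+1, j+1) ∈ [a] × [b]`): the condition `j - i = k - a` (1-based). -/
def InFile (a b k : ℕ) (x : Fin a × Fin b) : Prop :=
  ((x.2 : ℤ) - (x.1 : ℤ) = (k : ℤ) - (a : ℤ))

/-- The piecewise-linear file-toggle `τ_k^*`: simultaneously toggle all elements of the `k`-th
file (these toggles commute, and none reads another's value, so this is their composition). -/
def plFileToggle (a b : ℕ) (k : ℕ) (f : Fin a × Fin b → ℝ) : Fin a × Fin b → ℝ :=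
  fun x => if InFile a b k x then plL f x + plR f x - f x else f x

/-- Piecewise-linear promotion `π_P = τ_{n-1}^* ∘ ⋯ ∘ τ_1^*` (file 1 toggled first). -/
def plPromo (a b : ℕ) (f : Fin a × Fin b → ℝ) : Fin a × Fin b → ℝ :=
  (List.range (a + b - 1)).foldl (fun g k => plFileToggle a b (k + 1) g) f

/-- The birational file-toggle `τ_k^*`. -/
def bFileToggle (a b k : ℕ) (f : Fin a × Fin b → ℝ) : Fin a × Fin b → ℝ :=
  fun x => if InFile a b k x then bL f x * bR f x / f x else f x

/-- Birational promotion `π_B = τ_{n-1}^* ∘ ⋯ ∘ τ_1^*` (file 1 toggled first). -/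
def bPromo (a b : ℕ) (f : Fin a × Fin b → ℝ) : Fin a × Fin b → ℝ :=
  (List.range (a + b - 1)).foldl (fun g k => bFileToggle a b (k + 1) g) f

/-- The antipode map `(i, j) ↦ (a + 1 - i, b + 1 - j)` (in 1-based coordinates). -/
def antipode {a b : ℕ} (x : Fin a × Fin b) : Fin a × Fin b := (x.1.rev, x.2.rev)

/-- `p_k`: the product of the values of `f` over the `k`-th file (equal to `1` for `k = 0`
and `k = a + b`, since those files are empty). -/
def fileProd (a b : ℕ) (f : Fin a × Fin b → ℝ) (k : ℕ) : ℝ :=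
  ∏ x : Fin a × Fin b, if InFile a b k x then f x else 1

/-- The quotient sequence `Q(f) = (q_1, …, q_n)`, `q_k = p_k / p_{k-1}`. -/
def quotSeq (a b : ℕ) (f : Fin a × Fin b → ℝ) (k : ℕ) : ℝ :=
  fileProd a b f k / fileProd a b f (k - 1)


/-!
The new value at a point `x` of the file `k` is `L(x) R(x) / f(x)`, so
`p_k(τ_k^* f) p_k(f)` is the product of `L(x) R(x)` over the file, while the other `p_m` do not
change. The file is a diagonal chain `x_0 < x_1 < ⋯` with `x_{t+1} = x_t + (1, 1)`, and the two
upper covers `u, v` of `x_t` are the two lower covers of `x_{t+1}`; hence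
`R(x_t) L(x_{t+1}) = (u⁻¹ + v⁻¹)⁻¹ (u + v) = u v` and the product telescopes. What remains at the
two ends is one element of the file `k - 1` or `k + 1`, or the value `1` at `0̂` or `1̂`, so
`p_k(τ_k^* f) p_k(f) = p_{k-1}(f) p_{k+1}(f)`, which is the swap of `q_k` and `q_{k+1}`.
-/

open Finset

theorem WithTop.isMin_coe {α : Type*} [Preorder α] {x : α} : IsMin (x : WithTop α) ↔ IsMin x := by
  refine ⟨fun h y hy => WithTop.coe_le_coe.1 (h (WithTop.coe_le_coe.2 hy)), fun h c hc => ?_⟩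
  induction c using WithTop.recTopCoe with
  | top => exact le_top
  | coe y => exact WithTop.coe_le_coe.2 (h (WithTop.coe_le_coe.1 hc))

lemma Fin.isMin_iff_val_eq_zero {n : ℕ} (i : Fin n) : IsMin i ↔ (i : ℕ) = 0 :=
  ⟨fun h => Nat.le_zero.1 (Fin.le_def.1 (h (b := ⟨0, i.pos⟩) (Fin.le_def.2 (Nat.zero_le _)))),
    fun h j _ => Fin.le_def.2 (by omega)⟩

lemma Fin.isMax_iff_val_add_one_eq {n : ℕ} (i : Fin n) : IsMax i ↔ (i : ℕ) + 1 = n := by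
  have := i.isLt
  refine ⟨fun h => ?_, fun h j _ => Fin.le_def.2 (by omega)⟩
  have : n - 1 ≤ (i : ℕ) :=
    Fin.le_def.1 (h (b := ⟨n - 1, by omega⟩) (Fin.le_def.2 (show (i : ℕ) ≤ n - 1 by omega)))
  omega

lemma Fin.covBy_iff_val_add_one_eq {n : ℕ} (i j : Fin n) : i ⋖ j ↔ (i : ℕ) + 1 = j := by
  rw [Fin.covBy_iff, Nat.covBy_iff_add_one_eq]

lemma sum_withBot_withTop {α M : Type*} [Fintype α] [AddCommMonoid M]
    (g : WithBot (WithTop α) → M) : ∑ y, g y = g ⊥ + (g ⊤ + ∑ z : α, g (emb z)) :=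
  (Fintype.sum_option g).trans (congrArg _ (Fintype.sum_option fun w : WithTop α => g w))

lemma extendHat_bot {α : Type*} (v0 v1 : ℝ) (f : α → ℝ) : extendHat v0 v1 f ⊥ = v0 := rfl

lemma extendHat_top {α : Type*} (v0 v1 : ℝ) (f : α → ℝ) : extendHat v0 v1 f ⊤ = v1 := rfl

lemma extendHat_emb {α : Type*} (v0 v1 : ℝ) (f : α → ℝ) (x : α) :
    extendHat v0 v1 f (emb x) = f x := rfl

section Hat

variable {Q : Type*} [PartialOrder Q]

lemma bot_covBy_emb (x : Q) : (⊥ : WithBot (WithTop Q)) ⋖ emb x ↔ IsMin x :=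
  WithBot.bot_covBy_coe.trans WithTop.isMin_coe

lemma emb_covBy_top (x : Q) : emb x ⋖ (⊤ : WithBot (WithTop Q)) ↔ IsMax x :=
  WithBot.coe_covBy_coe.trans WithTop.coe_covBy_top

lemma emb_covBy_emb (y x : Q) : emb y ⋖ emb x ↔ y ⋖ x :=
  WithBot.coe_covBy_coe.trans WithTop.coe_covBy_coe

variable [Fintype Q]

lemma bL_eq (f : Q → ℝ) (x : Q) :
    bL f x = ∑ z, (if z ⋖ x then f z else 0) + if IsMin x then 1 else 0 := by
  have not_top_covBy : ¬ (⊤ : WithBot (WithTop Q)) ⋖ emb x := fun h => not_top_lt h.lt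
  rw [bL, sum_withBot_withTop, if_neg not_top_covBy, bot_covBy_emb, zero_add, add_comm]
  simp only [emb_covBy_emb, extendHat_emb, extendHat_bot]

lemma bR_eq (f : Q → ℝ) (x : Q) :
    bR f x = (∑ z, (if x ⋖ z then (f z)⁻¹ else 0) + if IsMax x then 1 else 0)⁻¹ := by
  have not_covBy_bot : ¬ emb x ⋖ (⊥ : WithBot (WithTop Q)) := fun h => not_lt_bot h.lt
  rw [bR, sum_withBot_withTop, if_neg not_covBy_bot, emb_covBy_top, zero_add, add_comm]
  simp only [emb_covBy_emb, extendHat_emb, extendHat_top, inv_one]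

end Hat

section Grid

variable {a b : ℕ} {M : Type*}

lemma grid_covBy_iff (y x : Fin a × Fin b) :
    y ⋖ x ↔ (y.1 : ℕ) + 1 = x.1 ∧ (y.2 : ℕ) = x.2 ∨ (y.1 : ℕ) = x.1 ∧ (y.2 : ℕ) + 1 = x.2 := by
  rw [← Prod.mk.eta (p := y), ← Prod.mk.eta (p := x), Prod.mk_covBy_mk_iff,
    Fin.covBy_iff_val_add_one_eq, Fin.covBy_iff_val_add_one_eq, Fin.ext_iff, Fin.ext_iff]
  tauto

/-- The value of `g` at the point `(i, j)` of `[a] × [b]`, in the paper's 1-based coordinates,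
and `c` outside the grid. -/
def gridExt (c : M) (g : Fin a × Fin b → M) (i j : ℕ) : M :=
  if h : 0 < i ∧ i ≤ a ∧ 0 < j ∧ j ≤ b then g (⟨i - 1, by omega⟩, ⟨j - 1, by omega⟩) else c

lemma gridExt_succ_succ (c : M) (g : Fin a × Fin b → M) {i j : ℕ} (hi : i < a) (hj : j < b) :
    gridExt c g (i + 1) (j + 1) = g (⟨i, hi⟩, ⟨j, hj⟩) := by
  simp [gridExt, Nat.succ_le_of_lt hi, Nat.succ_le_of_lt hj]

lemma gridExt_eq_of_mem (c c' : M) (g : Fin a × Fin b → M) {i j : ℕ}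
    (h : 0 < i ∧ i ≤ a ∧ 0 < j ∧ j ≤ b) : gridExt c g i j = gridExt c' g i j := by
  simp only [gridExt, dif_pos h]

lemma gridExt_pos {c : ℝ} {g : Fin a × Fin b → ℝ} (hc : 0 < c) (hg : ∀ x, 0 < g x) (i j : ℕ) :
    0 < gridExt c g i j := by
  unfold gridExt
  split
  exacts [hg _, hc]

lemma gridExt_inv (c : ℝ) (g : Fin a × Fin b → ℝ) (i j : ℕ) :
    (gridExt c g i j)⁻¹ = gridExt c⁻¹ (fun x => (g x)⁻¹) i j := by
  unfold gridExt
  split <;> rfl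

@[to_additive]
lemma prod_ite_eq_gridExt [CommMonoid M] (g : Fin a × Fin b → M) (i j : ℕ) :
    ∏ x, (if (x.1 : ℕ) + 1 = i ∧ (x.2 : ℕ) + 1 = j then g x else 1) = gridExt 1 g i j := by
  unfold gridExt
  split_ifs with h
  · rw [Fintype.prod_eq_single (⟨i - 1, by omega⟩, ⟨j - 1, by omega⟩)]
    · rw [if_pos (by simp only; omega)]
    · intro x hx
      refine if_neg fun hij => hx (Prod.ext (Fin.ext ?_) (Fin.ext ?_)) <;> simp only <;> omega
  · exact Fintype.prod_eq_one _ fun x => if_neg (by omega)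

lemma sum_lowerCover_eq [AddCommMonoid M] (φ : Fin a × Fin b → M) (x : Fin a × Fin b) :
    ∑ y, (if y ⋖ x then φ y else 0) = gridExt 0 φ x.1 (x.2 + 1) + gridExt 0 φ (x.1 + 1) x.2 := by
  rw [← sum_ite_eq_gridExt, ← sum_ite_eq_gridExt, ← sum_add_distrib]
  refine sum_congr rfl fun y _ => ?_
  rw [grid_covBy_iff]
  split_ifs <;> first | omega | simp

lemma sum_upperCover_eq [AddCommMonoid M] (φ : Fin a × Fin b → M) (x : Fin a × Fin b) :
    ∑ y, (if x ⋖ y then φ y else 0)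
      = gridExt 0 φ (x.1 + 1 + 1) (x.2 + 1) + gridExt 0 φ (x.1 + 1) (x.2 + 1 + 1) := by
  rw [← sum_ite_eq_gridExt, ← sum_ite_eq_gridExt, ← sum_add_distrib]
  refine sum_congr rfl fun y _ => ?_
  rw [grid_covBy_iff]
  split_ifs <;> first | omega | simp

end Grid

section Rung

variable {a b : ℕ} (f : Fin a × Fin b → ℝ)

/- The rung at `(i, j)` is the pair `(i + 1, j)`, `(i, j + 1)` of (1-based) grid points: the
upper covers of `(i, j)` and the lower covers of `(i + 1, j + 1)`. Points outside the grid
contribute nothing to either sum (to the parallel sum through `0⁻¹ = 0`); the indicators stand for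
`0̂` below `(1, 1)` and `1̂` above `(a, b)`. -/

def rungSum (i j : ℕ) : ℝ :=
  gridExt 0 f (i + 1) j + gridExt 0 f i (j + 1) + if i = 0 ∧ j = 0 then 1 else 0

def rungParSum (i j : ℕ) : ℝ :=
  ((gridExt 0 f (i + 1) j)⁻¹ + (gridExt 0 f i (j + 1))⁻¹ + if i = a ∧ j = b then 1 else 0)⁻¹

def rungProd (i j : ℕ) : ℝ :=
  gridExt 1 f (i + 1) j * gridExt 1 f i (j + 1)

lemma bL_eq_rungSum (x : Fin a × Fin b) : bL f x = rungSum f x.1 x.2 := by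
  rw [bL_eq, sum_lowerCover_eq, Prod.isMin_iff, Fin.isMin_iff_val_eq_zero,
    Fin.isMin_iff_val_eq_zero, rungSum, add_comm (gridExt 0 f _ _)]
  congr

lemma bR_eq_rungParSum (x : Fin a × Fin b) : bR f x = rungParSum f (x.1 + 1) (x.2 + 1) := by
  rw [bR_eq, sum_upperCover_eq, Prod.isMax_iff, Fin.isMax_iff_val_add_one_eq,
    Fin.isMax_iff_val_add_one_eq, rungParSum, gridExt_inv, gridExt_inv, inv_zero]
  congr

lemma rungSum_eq_rungProd {i j : ℕ} (hstart : i = 0 ∨ j = 0) (hi : i < a) (hj : j < b) :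
    rungSum f i j = rungProd f i j := by
  unfold rungSum rungProd gridExt
  split_ifs <;> first | omega | simp

lemma rungParSum_eq_rungProd {i j : ℕ} (hend : i = a ∨ j = b) (hi : 0 < i) (hj : 0 < j)
    (hia : i ≤ a) (hjb : j ≤ b) : rungParSum f i j = rungProd f i j := by
  unfold rungParSum rungProd gridExt
  split_ifs <;> first | omega | simp

lemma rungParSum_mul_rungSum (hf : ∀ x, 0 < f x) {i j : ℕ} (hi : 0 < i) (hj : 0 < j)
    (hia : i < a) (hjb : j < b) : rungParSum f i j * rungSum f i j = rungProd f i j := by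
  have hu := gridExt_pos one_pos hf (i + 1) j
  have hv := gridExt_pos one_pos hf i (j + 1)
  rw [rungParSum, rungSum, rungProd, if_neg (by omega), if_neg (by omega),
    gridExt_eq_of_mem 0 1 f (by omega : 0 < i + 1 ∧ i + 1 ≤ a ∧ 0 < j ∧ j ≤ b),
    gridExt_eq_of_mem 0 1 f (by omega : 0 < i ∧ i ≤ a ∧ 0 < j + 1 ∧ j + 1 ≤ b)]
  field_simp
  ring

end Rung

lemma prod_range_mul_shift_eq {M : Type*} [CommMonoid M] (σ π ρ : ℕ → M) (n : ℕ)
    (h0 : σ 0 = ρ 0) (hlast : π (n + 1) = ρ (n + 1))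
    (hmid : ∀ t < n, π (t + 1) * σ (t + 1) = ρ (t + 1)) :
    ∏ t ∈ range (n + 1), σ t * π (t + 1) = ∏ t ∈ range (n + 2), ρ t := by
  have hρ : ∏ t ∈ range n, ρ (t + 1) = (∏ t ∈ range n, π (t + 1)) * ∏ t ∈ range n, σ (t + 1) := by
    rw [← prod_mul_distrib]
    exact (prod_congr rfl fun t ht => hmid t (mem_range.1 ht)).symm
  rw [prod_mul_distrib, prod_range_succ' σ, prod_range_succ (fun t => π (t + 1)),
    prod_range_succ' ρ, prod_range_succ (fun t => ρ (t + 1)), hρ, h0, hlast]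
  ac_rfl

section File

variable {a b : ℕ} (f : Fin a × Fin b → ℝ)

/- The 1-based diagonal `t ↦ (α + t, β + t)` runs through the file `m`; it starts at most one step
before the grid (`hstart`) and has left it by `t = N` (`hN`). -/
lemma prod_inFile_eq_prod_range {M : Type*} [CommMonoid M] (g : Fin a × Fin b → M)
    {m α β N : ℕ} (hdiag : β + a = α + m) (hstart : α ≤ 1 ∨ β ≤ 1)
    (hN : a < α + N ∨ b < β + N) :
    ∏ x, (if InFile a b m x then g x else 1) = ∏ t ∈ range N, gridExt 1 g (α + t) (β + t) := by
  simp_rw [← prod_ite_eq_gridExt]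
  rw [prod_comm]
  refine prod_congr rfl fun x _ => ?_
  rw [prod_ite_one _ _ (fun s _ t _ hs ht => by omega)]
  refine if_congr ?_ rfl rfl
  have := x.1.isLt
  have := x.2.isLt
  simp only [InFile, mem_range]
  exact ⟨fun h => ⟨x.1 + 1 - α, by omega⟩, fun ⟨t, ht⟩ => by omega⟩

lemma fileProd_pos (hf : ∀ x, 0 < f x) (m : ℕ) : 0 < fileProd a b f m :=
  prod_pos fun x _ => by split; exacts [hf x, one_pos]

lemma fileProd_bFileToggle_of_ne {k m : ℕ} (hm : m ≠ k) :
    fileProd a b (bFileToggle a b k f) m = fileProd a b f m := by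
  refine prod_congr rfl fun x _ => ite_congr rfl (fun hx => if_neg fun hk => hm ?_) fun _ => rfl
  simp only [InFile] at hx hk
  omega

lemma fileProd_bFileToggle_mul_fileProd (hf : ∀ x, 0 < f x) (k : ℕ) :
    fileProd a b (bFileToggle a b k f) k * fileProd a b f k
      = ∏ x, if InFile a b k x then bL f x * bR f x else 1 := by
  rw [fileProd, fileProd, ← prod_mul_distrib]
  refine prod_congr rfl fun x _ => ?_
  simp only [bFileToggle]
  split_ifs
  · exact div_mul_cancel₀ _ (hf x).ne'
  · exact one_mul 1

/- The file `k` is the diagonal segment from `(α, β)` to `(α + n, β + n)` in the 0-based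
coordinates of `Fin a × Fin b`. -/
lemma fileProd_bFileToggle_mul (hf : ∀ x, 0 < f x) {k α β n : ℕ} (hdiag : β + a = α + k)
    (hstart : α = 0 ∨ β = 0) (hα : α + n < a) (hβ : β + n < b)
    (hend : α + n + 1 = a ∨ β + n + 1 = b) :
    fileProd a b (bFileToggle a b k f) k * fileProd a b f k
      = fileProd a b f (k - 1) * fileProd a b f (k + 1) := by
  rw [fileProd_bFileToggle_mul_fileProd f hf, fileProd, fileProd,
    prod_inFile_eq_prod_range _ (α := α + 1) (β := β + 1) (N := n + 1) (by omega) (by omega)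
      (by omega),
    prod_inFile_eq_prod_range _ (α := α + 1) (β := β) (N := n + 2) (by omega) (by omega)
      (by omega),
    prod_inFile_eq_prod_range _ (α := α) (β := β + 1) (N := n + 2) (by omega) (by omega)
      (by omega),
    ← prod_mul_distrib]
  have hLR : ∀ t ∈ range (n + 1), gridExt 1 (fun x => bL f x * bR f x) (α + 1 + t) (β + 1 + t)
      = rungSum f (α + t) (β + t) * rungParSum f (α + (t + 1)) (β + (t + 1)) := by
    intro t ht
    have := mem_range.1 ht
    rw [add_right_comm α, add_right_comm β, gridExt_succ_succ _ _ (by omega) (by omega),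
      bL_eq_rungSum, bR_eq_rungParSum]
    rfl
  refine (prod_congr rfl hLR).trans ((prod_range_mul_shift_eq (fun t => rungSum f (α + t) (β + t))
    (fun t => rungParSum f (α + t) (β + t)) (fun t => rungProd f (α + t) (β + t)) n
    (rungSum_eq_rungProd f (by omega) (by omega) (by omega))
    (rungParSum_eq_rungProd f (by omega) (by omega) (by omega) (by omega) (by omega))
    fun t _ => rungParSum_mul_rungSum f hf (by omega) (by omega) (by omega) (by omega)).trans ?_)
  simp only [rungProd, add_right_comm _ 1]

end File

/-- Toggling the `k`-th file swaps the `k`-th and `(k+1)`-st entries of the quotient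
sequence: `Q(τ_k^* f) = σ_k Q(f)`. -/
theorem stmt9 (a b : ℕ) (ha : 1 ≤ a) (hb : 1 ≤ b)
    (f : Fin a × Fin b → ℝ) (hf : ∀ x, 0 < f x)
    (k : ℕ) (hk1 : 1 ≤ k) (hk2 : k ≤ a + b - 1) :
    ∀ m, 1 ≤ m → m ≤ a + b →
      quotSeq a b (bFileToggle a b k f) m = quotSeq a b f (Equiv.swap k (k + 1) m) := by
  intro m _ _
  have hp := fileProd_pos f hf
  have hkey := fileProd_bFileToggle_mul f hf (k := k) (α := a - k) (β := k - a)
    (n := min (a - (a - k)) (b - (k - a)) - 1) (by omega) (by omega) (by omega) (by omega)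
    (by omega)
  have hp' : 0 < fileProd a b (bFileToggle a b k f) k :=
    (pos_iff_pos_of_mul_pos (hkey ▸ mul_pos (hp _) (hp _))).2 (hp k)
  unfold quotSeq
  rcases eq_or_ne m k with rfl | hmk
  · rw [Equiv.swap_apply_left, fileProd_bFileToggle_of_ne f (by omega : m - 1 ≠ m),
      Nat.add_sub_cancel, div_eq_div_iff (hp _).ne' (hp _).ne']
    linear_combination hkey
  rcases eq_or_ne m (k + 1) with rfl | hmk'
  · rw [Equiv.swap_apply_right, Nat.add_sub_cancel, fileProd_bFileToggle_of_ne f (by omega),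
      div_eq_div_iff hp'.ne' (hp _).ne']
    linear_combination -hkey
  · rw [Equiv.swap_apply_of_ne_of_ne hmk hmk', fileProd_bFileToggle_of_ne f hmk,
      fileProd_bFileToggle_of_ne f (by omega)]

end
end

section
/- Birational rowmotion is well defined: for a finite poset P with |P| = p, if x_1,…,x_p and x'_1,…,x'_p are two linear extensions of P, then the compositions of birational toggles τ_{x_1}∘τ_{x_2}∘⋯∘τ_{x_p} and τ_{x'_1}∘τ_{x'_2}∘⋯∘τ_{x'_p} are equal as maps on (ℝ>0)^P. -/
open scoped Classical

noncomputable section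

variable {P : Type*} [Fintype P] [PartialOrder P]

lemma extendHat_update_ne (v0 v1 v : ℝ) (f : P → ℝ) (y : P) (z : WithBot (WithTop P))
    (hz : z ≠ emb y) : extendHat v0 v1 (Function.update f y v) z = extendHat v0 v1 f z := by
  induction z using WithBot.recBotCoe with
  | bot => rfl
  | coe a =>
    induction a using WithTop.recTopCoe with
    | top => rfl
    | coe w =>
      have hw : w ≠ y := by rintro rfl; exact hz rfl
      simp [extendHat, Function.update_of_ne hw]

lemma emb_lt_emb {x y : P} (h : emb x < emb y) : x < y := by
  simpa [emb] using h

lemma bL_update (f : P → ℝ) (x y : P) (v : ℝ) (h : ¬ y < x) :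
    bL (Function.update f y v) x = bL f x := by
  unfold bL
  refine Finset.sum_congr rfl fun z _ => ?_
  split_ifs with hz
  · rw [extendHat_update_ne]
    rintro rfl
    exact h (emb_lt_emb hz.lt)
  · rfl

lemma bR_update (f : P → ℝ) (x y : P) (v : ℝ) (h : ¬ x < y) :
    bR (Function.update f y v) x = bR f x := by
  unfold bR
  congr 1
  refine Finset.sum_congr rfl fun z _ => ?_
  split_ifs with hz
  · rw [extendHat_update_ne]
    rintro rfl
    exact h (emb_lt_emb hz.lt)
  · rfl

lemma bToggle_comm (x y : P) (h1 : ¬ x < y) (h2 : ¬ y < x) (hne : x ≠ y) (f : P → ℝ) :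
    bToggle x (bToggle y f) = bToggle y (bToggle x f) := by
  unfold bToggle
  rw [bL_update f x y _ h2, bR_update f x y _ h1,
      bL_update f y x _ h1, bR_update f y x _ h2,
      Function.update_of_ne hne, Function.update_of_ne hne.symm,
      Function.update_comm hne]

lemma foldr_middle (x : P) (a b : List P) (f : P → ℝ)
    (hcomm : ∀ u ∈ a, ¬ x < u ∧ ¬ u < x ∧ x ≠ u) :
    (a ++ x :: b).foldr bToggle f = bToggle x ((a ++ b).foldr bToggle f) := by
  induction a with
  | nil => rfl
  | cons u a ih =>
    obtain ⟨h1, h2, h3⟩ := hcomm u (by simp)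
    simp only [List.cons_append, List.foldr_cons]
    rw [ih (fun v hv => hcomm v (by simp [hv])), bToggle_comm u x h2 h1 (Ne.symm h3)]

lemma foldr_perm (l : List P) : ∀ (l' : List P), l.Nodup →
    l.Pairwise (fun u v => ¬ v < u) → l'.Pairwise (fun u v => ¬ v < u) →
    l.Perm l' → ∀ f : P → ℝ, l.foldr bToggle f = l'.foldr bToggle f := by
  induction l with
  | nil =>
    intro l' _ _ _ hperm f
    rw [hperm.nil_eq]
  | cons x t ih =>
    intro l' hnd hp hp' hperm f
    have hx' : x ∈ l' := hperm.mem_iff.mp (by simp)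
    obtain ⟨a, b, rfl⟩ := List.append_of_mem hx'
    have hnd' : (a ++ x :: b).Nodup := hperm.nodup_iff.mp hnd
    have hxa : x ∉ a := fun hxa =>
      List.disjoint_of_nodup_append hnd' hxa (by simp)
    have hperm' : t.Perm (a ++ b) := by
      have : (x :: t).Perm (x :: (a ++ b)) := hperm.trans List.perm_middle
      exact (List.perm_cons x).mp this
    have hcomm : ∀ u ∈ a, ¬ x < u ∧ ¬ u < x ∧ x ≠ u := by
      intro u hu
      have hut : u ∈ t := by
        have : u ∈ x :: t := hperm.mem_iff.mpr (by simp [hu])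
        rcases this with _ | h
        · exact absurd hu hxa
        · assumption
      refine ⟨?_, ?_, ?_⟩
      · -- u before x in l', pairwise ¬ x < u
        have := List.pairwise_append.mp hp'
        exact this.2.2 u hu x (by simp)
      · exact (List.pairwise_cons.mp hp).1 u hut
      · rintro rfl; exact hxa hu
    rw [List.foldr_cons, foldr_middle x a b f hcomm]
    exact congrArg (bToggle x) (ih (a ++ b) (List.Nodup.of_cons hnd)
      (List.pairwise_cons.mp hp).2 (hp'.sublist (by simp)) hperm' f)

/-- Birational rowmotion is well defined: any two linear extensions of `P` give the same
composite of birational toggles. -/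
theorem stmt19 {P : Type*} [Fintype P] [PartialOrder P]
    (xs ys : List P) (hxs : IsLinearExt xs) (hys : IsLinearExt ys)
    (f : P → ℝ) (hf : ∀ x, 0 < f x) :
    bRow xs f = bRow ys f := by
  obtain ⟨hnd, hmem, hp⟩ := hxs
  obtain ⟨hnd', hmem', hp'⟩ := hys
  have hperm : xs.Perm ys :=
    (List.perm_ext_iff_of_nodup hnd hnd').mpr fun a => by simp [hmem a, hmem' a]
  exact foldr_perm xs ys hnd hp hp' hperm f

end
end
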